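/- arXiv:0704.0839 — 4 statements merged into one kernel-verified Lean document; each statement's English description precedes it below -/
import Mathlib

section
/- Let f : ℝⁿ → ℝ be a continuous function and define g : ℝⁿ × ℝ → ℝ by g(x,y) = max(y, f(x)). Then g fails to be locally affine at a point (x₀,y₀) if and only if either y₀ = f(x₀), or y₀ < f(x₀) and f fails to be locally affine at x₀. (Hence the non-affinity locus of g is the union of the graph of f with the strict undergraph of f over the non-affinity locus of f.) -/
/-- A function `h : E → ℝ` is *locally affine* at a point `p` if it agrees with an
affine map (a linear map plus a constant) on some open neighborhood of `p`. -/
def LocallyAffineAt {E : Type*} [AddCommGroup E] [Module ℝ E] [TopologicalSpace E]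
    (h : E → ℝ) (p : E) : Prop :=
  ∃ U : Set E, IsOpen U ∧ p ∈ U ∧ ∃ (L : E →ₗ[ℝ] ℝ) (c : ℝ), ∀ q ∈ U, h q = L q + c

/-- For a continuous `f : ℝⁿ → ℝ` and `g(x,y) = max (y, f x)`, the function `g` fails to be
locally affine at `(x₀, y₀)` iff `y₀ = f x₀`, or `y₀ < f x₀` and `f` fails to be locally
affine at `x₀`. -/
theorem nonAffine_locus_of_tropical_modification (n : ℕ)
    (f : (Fin n → ℝ) → ℝ) (hf : Continuous f)
    (g : ((Fin n → ℝ) × ℝ) → ℝ) (hg : ∀ x y, g (x, y) = max y (f x))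
    (x₀ : Fin n → ℝ) (y₀ : ℝ) :
    ¬ LocallyAffineAt g (x₀, y₀) ↔
      (y₀ = f x₀ ∨ (y₀ < f x₀ ∧ ¬ LocallyAffineAt f x₀)) := by
  have hUnder : IsOpen {p : (Fin n → ℝ) × ℝ | p.2 < f p.1} :=
    isOpen_lt continuous_snd (hf.comp continuous_fst)
  have hOver : IsOpen {p : (Fin n → ℝ) × ℝ | f p.1 < p.2} :=
    isOpen_lt (hf.comp continuous_fst) continuous_snd
  rcases lt_trichotomy y₀ (f x₀) with hlt | heq | hgt
  · -- y₀ < f x₀ : g loc affine ↔ f loc affine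
    constructor
    · intro hng
      right
      refine ⟨hlt, fun hfa => hng ?_⟩
      obtain ⟨V, hV, hxV, Lf, c, hLf⟩ := hfa
      refine ⟨(Prod.fst ⁻¹' V) ∩ {p | p.2 < f p.1},
        (hV.preimage continuous_fst).inter hUnder, ⟨hxV, hlt⟩,
        Lf.comp (LinearMap.fst ℝ _ ℝ), c, ?_⟩
      rintro ⟨x, y⟩ ⟨hxV', hy⟩
      simp only [hg, LinearMap.comp_apply, LinearMap.fst_apply]
      rw [max_eq_right (le_of_lt hy), hLf x hxV']
    · rintro (h | ⟨_, hnf⟩) hga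
      · exact absurd h (ne_of_lt hlt)
      · apply hnf
        obtain ⟨U, hU, hpU, L, c, hL⟩ := hga
        refine ⟨{x | (x, y₀) ∈ U ∧ y₀ < f x},
          ((hU.preimage (Continuous.prodMk_left y₀)).inter
            (isOpen_lt continuous_const hf)), ⟨hpU, hlt⟩,
          L.comp (LinearMap.inl ℝ _ ℝ), L (0, y₀) + c, ?_⟩
        intro x ⟨hxU, hx⟩
        have := hL (x, y₀) hxU
        rw [hg] at this
        rw [max_eq_right (le_of_lt hx)] at this
        have hsplit : ((x, y₀) : (Fin n → ℝ) × ℝ) = (x, 0) + (0, y₀) := by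
          simp [Prod.ext_iff]
        rw [hsplit, map_add] at this
        simp only [LinearMap.comp_apply, LinearMap.inl_apply]
        linarith
  · -- y₀ = f x₀ : g is never locally affine here
    simp only [heq, true_or, iff_true]
    rintro ⟨U, hU, hpU, L, c, hL⟩
    obtain ⟨ε, hε, hball⟩ := Metric.isOpen_iff.mp hU _ hpU
    set t := ε / 2 with ht
    have htpos : 0 < t := by positivity
    have hmem : ∀ s : ℝ, |s| < ε → ((x₀, y₀ + s) : (Fin n → ℝ) × ℝ) ∈ U := by
      intro s hs
      apply hball
      rw [Metric.mem_ball, Prod.dist_eq]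
      simpa [Real.dist_eq, heq, hε] using hs
    have h0 := hL (x₀, y₀) (by rw [heq]; exact hpU)
    rw [hg, max_eq_left heq.ge] at h0
    have h1 := hL (x₀, y₀ + t) (hmem t (by rw [abs_of_pos htpos]; linarith))
    have h2 := hL (x₀, y₀ - t) (by
      have := hmem (-t) (by rw [abs_neg, abs_of_pos htpos]; linarith)
      simpa [sub_eq_add_neg] using this)
    rw [hg, max_eq_left (by linarith [heq.le])] at h1
    rw [hg, max_eq_right (by linarith [heq.ge])] at h2
    have e1 : ((x₀, y₀ + t) : (Fin n → ℝ) × ℝ) = (x₀, y₀) + t • ((0 : Fin n → ℝ), (1:ℝ)) := by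
      simp [Prod.ext_iff]
    have e2 : ((x₀, y₀ - t) : (Fin n → ℝ) × ℝ) = (x₀, y₀) - t • ((0 : Fin n → ℝ), (1:ℝ)) := by
      simp [Prod.ext_iff, sub_eq_add_neg]
    rw [e1, map_add, map_smul] at h1
    rw [e2, map_sub, map_smul] at h2
    rw [← heq] at h2
    simp only [smul_eq_mul] at h1 h2
    linarith
  · -- f x₀ < y₀ : g is locally affine (g = snd), RHS false
    constructor
    · intro hng
      exfalso
      apply hng
      refine ⟨{p | f p.1 < p.2}, hOver, hgt, LinearMap.snd ℝ _ ℝ, 0, ?_⟩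
      rintro ⟨x, y⟩ hy
      simp only [hg, LinearMap.snd_apply, add_zero]
      exact max_eq_left (le_of_lt hy)
    · rintro (h | ⟨h, _⟩)
      · exact absurd h (ne_of_gt hgt)
      · exact absurd h (not_lt_of_gt hgt)
end

section
/- Let f : ℝⁿ → ℝ be given by f(x) = max_{j∈S} (a_j + ⟨v_j, x⟩) for a finite nonempty set S, a_j ∈ ℝ, v_j ∈ ℤⁿ. Then the set of points x at which f is not locally affine is contained in the union, over all pairs i ≠ j in S with (a_i, v_i) ≠ (a_j, v_j), of the sets {x ∈ ℝⁿ : a_i + ⟨v_i, x⟩ = a_j + ⟨v_j, x⟩}, each of which is either empty or an affine hyperplane. In particular, the non-affinity locus of f is a closed set with empty interior. -/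
section Aux
variable {n m : ℕ}

lemma aux_part2 (a : Fin (m + 1) → ℝ) (v : Fin (m + 1) → Fin n → ℤ)
    (i j : Fin (m + 1)) (hdata : (a i, v i) ≠ (a j, v j)) :
    ({x : Fin n → ℝ | a i + ∑ t, (v i t : ℝ) * x t = a j + ∑ t, (v j t : ℝ) * x t}
        = (∅ : Set (Fin n → ℝ)) ∨
      ∃ (u : Fin n → ℝ) (c : ℝ), u ≠ 0 ∧
        {x : Fin n → ℝ | a i + ∑ t, (v i t : ℝ) * x t = a j + ∑ t, (v j t : ℝ) * x t}
          = {x : Fin n → ℝ | ∑ t, u t * x t = c}) := by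
  by_cases hv : v i = v j
  · left
    ext x
    simp only [Set.mem_setOf_eq, Set.mem_empty_iff_false, iff_false, hv]
    intro h
    exact hdata (by rw [Prod.mk.injEq, hv]; exact ⟨by linarith, rfl⟩)
  · right
    refine ⟨fun t => (v i t : ℝ) - (v j t : ℝ), a j - a i, ?_, ?_⟩
    · intro h0
      apply hv
      funext t
      have := congrFun h0 t
      simp only [Pi.zero_apply, sub_eq_zero] at this
      exact_mod_cast this
    · ext x
      simp only [Set.mem_setOf_eq, sub_mul, Finset.sum_sub_distrib]
      constructor <;> intro h <;> linarith

lemma hyperplane_interior (u : Fin n → ℝ) (c : ℝ) (hu : u ≠ 0) :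
    interior {x : Fin n → ℝ | ∑ t, u t * x t = c} = ∅ := by
  by_contra h
  obtain ⟨x, hx⟩ := Set.nonempty_iff_ne_empty.2 h
  obtain ⟨t, ht⟩ := Function.ne_iff.1 hu
  simp only [Pi.zero_apply] at ht
  obtain ⟨ε, hε, hball⟩ := Metric.isOpen_iff.1 isOpen_interior x hx
  have hx' : x ∈ {x : Fin n → ℝ | ∑ s, u s * x s = c} := interior_subset hx
  set y : Fin n → ℝ := x + (ε / 2) • (Pi.single t 1 : Fin n → ℝ) with hy
  have hyball : y ∈ Metric.ball x ε := by
    rw [Metric.mem_ball, hy]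
    have : dist (x + (ε / 2) • (Pi.single t 1 : Fin n → ℝ)) x = ‖(ε / 2) • (Pi.single t 1 : Fin n → ℝ)‖ := by
      rw [dist_eq_norm]; simp
    rw [this, norm_smul]
    have h1 : ‖(Pi.single t 1 : Fin n → ℝ)‖ ≤ 1 := by
      rw [pi_norm_le_iff_of_nonneg zero_le_one]
      intro s
      rcases eq_or_ne s t with rfl | hs
      · simp
      · simp [Pi.single_apply, hs]
    calc ‖ε / 2‖ * ‖(Pi.single t 1 : Fin n → ℝ)‖ ≤ ‖ε / 2‖ * 1 := by
          exact mul_le_mul_of_nonneg_left h1 (norm_nonneg _)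
      _ = ε / 2 := by rw [mul_one, Real.norm_eq_abs, abs_of_pos (by linarith)]
      _ < ε := by linarith
  have hy' : y ∈ {x : Fin n → ℝ | ∑ s, u s * x s = c} := interior_subset (hball hyball)
  have : ∑ s, u s * y s = (∑ s, u s * x s) + (ε / 2) * u t := by
    simp only [hy, Pi.add_apply, Pi.smul_apply, smul_eq_mul, mul_add, Finset.sum_add_distrib]
    congr 1
    rw [Finset.sum_eq_single t]
    · simp; ring
    · intro s _ hs; simp [Pi.single_apply, hs]
    · simp
  rw [Set.mem_setOf_eq] at hx' hy'
  rw [hx', hy'] at this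
  have : (ε / 2) * u t = 0 := by linarith
  rcases mul_eq_zero.1 this with h | h
  · linarith
  · exact ht h

end Aux

/-- The non-affinity locus of a tropical Laurent polynomial
`f x = max_j (a j + ⟨v j, x⟩)` is contained in the union over pairs `i ≠ j` with distinct
data `(a i, v i) ≠ (a j, v j)` of the loci where the `i`-th and `j`-th terms agree;
each such locus is empty or an affine hyperplane, and the non-affinity locus is closed
with empty interior. -/
theorem nonAffine_locus_of_tropical_polynomial (n m : ℕ)
    (f : (Fin n → ℝ) → ℝ)
    (a : Fin (m + 1) → ℝ) (v : Fin (m + 1) → Fin n → ℤ)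
    (hf : ∀ x, f x =
      Finset.univ.sup' Finset.univ_nonempty (fun j => a j + ∑ i, (v j i : ℝ) * x i)) :
    ({x | ¬ LocallyAffineAt f x} ⊆
        ⋃ (i) (j) (_ : i ≠ j ∧ (a i, v i) ≠ (a j, v j)),
          {x : Fin n → ℝ | a i + ∑ t, (v i t : ℝ) * x t = a j + ∑ t, (v j t : ℝ) * x t}) ∧
    (∀ i j : Fin (m + 1), i ≠ j → (a i, v i) ≠ (a j, v j) →
      ({x : Fin n → ℝ | a i + ∑ t, (v i t : ℝ) * x t = a j + ∑ t, (v j t : ℝ) * x t}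
          = (∅ : Set (Fin n → ℝ)) ∨
        ∃ (u : Fin n → ℝ) (c : ℝ), u ≠ 0 ∧
          {x : Fin n → ℝ | a i + ∑ t, (v i t : ℝ) * x t = a j + ∑ t, (v j t : ℝ) * x t}
            = {x : Fin n → ℝ | ∑ t, u t * x t = c})) ∧
    IsClosed {x | ¬ LocallyAffineAt f x} ∧
    interior {x | ¬ LocallyAffineAt f x} = ∅ := by
  classical
  have hcont : ∀ j : Fin (m+1), Continuous (fun y : Fin n → ℝ => a j + ∑ t, (v j t : ℝ) * y t) :=
    fun j => continuous_const.add (continuous_finset_sum _ fun t _ => continuous_const.mul (continuous_apply t))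
  -- Part 1
  have part1 : {x | ¬ LocallyAffineAt f x} ⊆
      ⋃ (i) (j) (_ : i ≠ j ∧ (a i, v i) ≠ (a j, v j)),
        {x : Fin n → ℝ | a i + ∑ t, (v i t : ℝ) * x t = a j + ∑ t, (v j t : ℝ) * x t} := by
    intro x hx
    by_contra hxB
    apply hx
    simp only [Set.mem_iUnion, Set.mem_setOf_eq, not_exists] at hxB
    obtain ⟨j0, -, hj0⟩ := Finset.exists_mem_eq_sup' (Finset.univ_nonempty)
      (fun j => a j + ∑ t, (v j t : ℝ) * x t)
    set U : Set (Fin n → ℝ) := ⋂ (j : Fin (m+1)), ⋂ (_ : (a j, v j) ≠ (a j0, v j0)),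
        {y | a j + ∑ t, (v j t : ℝ) * y t < a j0 + ∑ t, (v j0 t : ℝ) * y t} with hU
    have hUopen : IsOpen U := by
      refine isOpen_iInter_of_finite fun j => isOpen_iInter_of_finite fun hj => ?_
      exact isOpen_lt (hcont j) (hcont j0)
    have hxU : x ∈ U := by
      refine Set.mem_iInter₂.2 fun j hj => ?_
      have hle : a j + ∑ t, (v j t : ℝ) * x t ≤ a j0 + ∑ t, (v j0 t : ℝ) * x t := by
        rw [← hj0]
        exact Finset.le_sup' (fun j => a j + ∑ t, (v j t : ℝ) * x t) (Finset.mem_univ j)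
      have hjj0 : j ≠ j0 := fun h => hj (by rw [h])
      exact lt_of_le_of_ne hle (hxB j j0 ⟨hjj0, hj⟩)
    refine ⟨U, hUopen, hxU,
      ∑ t, (v j0 t : ℝ) • (LinearMap.proj t : ((Fin n → ℝ) →ₗ[ℝ] ℝ)), a j0, ?_⟩
    intro q hq
    have hLq : (∑ t, (v j0 t : ℝ) • (LinearMap.proj t : ((Fin n → ℝ) →ₗ[ℝ] ℝ))) q
        = ∑ t, (v j0 t : ℝ) * q t := by
      simp [LinearMap.proj_apply]
    rw [hf q, hLq, add_comm (∑ t, (v j0 t : ℝ) * q t) (a j0)]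
    apply le_antisymm
    · apply Finset.sup'_le
      intro j _
      by_cases hj : (a j, v j) = (a j0, v j0)
      · rw [Prod.mk.injEq] at hj
        rw [hj.1, hj.2]
      · exact le_of_lt (Set.mem_iInter₂.1 hq j hj)
    · exact Finset.le_sup' (fun j => a j + ∑ i, (v j i : ℝ) * q i) (Finset.mem_univ j0)
  -- Closedness
  have hclosed : IsClosed {x | ¬ LocallyAffineAt f x} := by
    rw [← isOpen_compl_iff]
    have hc : {x | ¬ LocallyAffineAt f x}ᶜ = {x | LocallyAffineAt f x} := by
      ext y; simp
    rw [hc, isOpen_iff_forall_mem_open]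
    rintro p ⟨U, hUopen, hpU, L, c, hLc⟩
    exact ⟨U, fun q hq => ⟨U, hUopen, hq, L, c, hLc⟩, hUopen, hpU⟩
  -- Interior
  have hmeagre : IsMeagre (⋃ (i) (j) (_ : i ≠ j ∧ (a i, v i) ≠ (a j, v j)),
      {x : Fin n → ℝ | a i + ∑ t, (v i t : ℝ) * x t = a j + ∑ t, (v j t : ℝ) * x t}) := by
    rw [isMeagre_iff_countable_union_isNowhereDense]
    refine ⟨Set.range (fun p : Fin (m+1) × Fin (m+1) =>
        ⋃ (_ : p.1 ≠ p.2 ∧ (a p.1, v p.1) ≠ (a p.2, v p.2)),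
          {x : Fin n → ℝ | a p.1 + ∑ t, (v p.1 t : ℝ) * x t
            = a p.2 + ∑ t, (v p.2 t : ℝ) * x t}), ?_, Set.countable_range _, ?_⟩
    · rintro s ⟨⟨i, j⟩, rfl⟩
      show IsNowhereDense (⋃ (_ : i ≠ j ∧ (a i, v i) ≠ (a j, v j)),
        {x : Fin n → ℝ | a i + ∑ t, (v i t : ℝ) * x t = a j + ∑ t, (v j t : ℝ) * x t})
      by_cases hp : i ≠ j ∧ (a i, v i) ≠ (a j, v j)
      · rw [show (⋃ (_ : i ≠ j ∧ (a i, v i) ≠ (a j, v j)),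
            {x : Fin n → ℝ | a i + ∑ t, (v i t : ℝ) * x t = a j + ∑ t, (v j t : ℝ) * x t})
            = {x : Fin n → ℝ | a i + ∑ t, (v i t : ℝ) * x t = a j + ∑ t, (v j t : ℝ) * x t}
            from iSup_pos hp]
        have hcl : IsClosed {x : Fin n → ℝ | a i + ∑ t, (v i t : ℝ) * x t
            = a j + ∑ t, (v j t : ℝ) * x t} := isClosed_eq (hcont i) (hcont j)
        rw [hcl.isNowhereDense_iff]
        rcases aux_part2 a v i j hp.2 with h | ⟨u, c, hu, hset⟩
        · rw [h, interior_empty]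
        · rw [hset]
          exact hyperplane_interior u c hu
      · rw [show (⋃ (_ : i ≠ j ∧ (a i, v i) ≠ (a j, v j)),
            {x : Fin n → ℝ | a i + ∑ t, (v i t : ℝ) * x t = a j + ∑ t, (v j t : ℝ) * x t})
            = (∅ : Set (Fin n → ℝ)) from by rw [Set.iUnion_eq_empty]; exact fun h => absurd h hp]
        exact isNowhereDense_empty
    · intro x hx
      simp only [Set.mem_iUnion, Set.mem_setOf_eq] at hx
      obtain ⟨i, j, hij, hx⟩ := hx
      exact Set.mem_sUnion.2 ⟨_, ⟨(i, j), rfl⟩, Set.mem_iUnion.2 ⟨hij, hx⟩⟩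
  refine ⟨part1, fun i j _ hd => aux_part2 a v i j hd, hclosed, ?_⟩
  exact interior_eq_empty_iff_dense_compl.2 (dense_of_mem_residual (hmeagre.mono part1))
end

section
/- Let T₁ and T₂ be finite trees in which every non-leaf vertex has degree at least 3, equipped with bijections from a common finite label set L (with |L| ≥ 3) onto their respective sets of leaves. Suppose that for all pairwise distinct labels a, b, c, d ∈ L, the unique path in T₁ between the leaves labeled a and b is edge-disjoint from the unique path in T₁ between the leaves labeled c and d if and only if the corresponding paths in T₂ are edge-disjoint. Then there exists a graph isomorphism from T₁ to T₂ carrying the leaf labeled x in T₁ to the leaf labeled x in T₂ for every x ∈ L. -/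
/-!
Every vertex is the median of three labelled leaves: a leaf `x` is the median of `x, x, x`, and
an inner vertex, having at least three branches, is the median of leaves taken from three of
them. The medians of `a, b, c` and of `a, b, d` coincide exactly when the paths `a – b` and
`c – d` are edge-disjoint, and two triples with the same median are linked by a short chain of
such single replacements. Hence the disjointness data decide which label triples have the same
median, which yields a label-preserving bijection of the vertex sets. It preserves membership in
paths between leaves, hence betweenness (a path avoiding a vertex extends to a path between
leaves avoiding it), hence adjacency.
-/

theorem Function.Surjective.exists_equiv_apply_eq {α β γ : Type*} {f : α → β} {g : α → γ}
    (hf : Function.Surjective f) (hg : Function.Surjective g) (h : ∀ a b, f a = f b ↔ g a = g b) :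
    ∃ e : β ≃ γ, ∀ a, e (f a) = g a := by
  have hfg (a : α) : g (Function.surjInv hf (f a)) = g a :=
    (h _ _).mp (Function.surjInv_eq hf (f a))
  refine ⟨.ofBijective (fun b => g (Function.surjInv hf b)) ⟨fun b b' hbb' => ?_, fun c => ?_⟩, hfg⟩
  · rw [← Function.surjInv_eq hf b, ← Function.surjInv_eq hf b']
    exact (h _ _).mpr hbb'
  · obtain ⟨a, rfl⟩ := hg c
    exact ⟨f a, hfg a⟩

namespace SimpleGraph

open Walk

theorem Walk.isPath_append_of_support_inter {V : Type*} {G : SimpleGraph V} {x y z : V}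
    {p : G.Walk x y} {q : G.Walk y z} (hp : p.IsPath) (hq : q.IsPath)
    (h : ∀ w ∈ p.support, w ∈ q.support → w = y) : (p.append q).IsPath := by
  rw [isPath_def, support_append]
  refine hp.support_nodup.append (hq.support_nodup.sublist q.support.tail_sublist) ?_
  intro w hwp hwq
  have hq' := hq.support_nodup
  rw [← cons_tail_support] at hq'
  exact (List.nodup_cons.mp hq').1 (h w hwp (List.mem_of_mem_tail hwq) ▸ hwq)

theorem exists_adj_ne_ne_of_three_le_degree {V : Type*} {G : SimpleGraph V} {v : V}
    [Fintype (G.neighborSet v)] (h : 3 ≤ G.degree v) (a b : V) :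
    ∃ n, G.Adj v n ∧ n ≠ a ∧ n ≠ b := by
  classical
  have hlt : ({a, b} : Finset V).card < (G.neighborFinset v).card := by
    rw [card_neighborFinset_eq_degree]
    exact Finset.card_le_two.trans_lt h
  obtain ⟨n, hn, hab⟩ := Finset.exists_mem_notMem_of_card_lt_card hlt
  simp only [Finset.mem_insert, Finset.mem_singleton, not_or] at hab
  exact ⟨n, (mem_neighborFinset _ _ _).mp hn, hab⟩

namespace IsTree

variable {V : Type*} {G : SimpleGraph V} (hG : G.IsTree) {u v w x y z : V}

noncomputable def path (x y : V) : G.Walk x y :=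
  (hG.existsUnique_path x y).choose

theorem isPath_path (x y : V) : (hG.path x y).IsPath :=
  (hG.existsUnique_path x y).choose_spec.1

theorem eq_path {p : G.Walk x y} (hp : p.IsPath) : p = hG.path x y :=
  (hG.existsUnique_path x y).choose_spec.2 p hp

theorem path_self (x : V) : hG.path x x = nil :=
  (hG.eq_path .nil).symm

theorem reverse_path (x y : V) : (hG.path x y).reverse = hG.path y x :=
  hG.eq_path (hG.isPath_path x y).reverse

theorem mem_support_path_comm : u ∈ (hG.path x y).support ↔ u ∈ (hG.path y x).support := by
  rw [← reverse_path, support_reverse, List.mem_reverse]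

theorem mem_edges_path_comm {e : Sym2 V} : e ∈ (hG.path x y).edges ↔ e ∈ (hG.path y x).edges := by
  rw [← reverse_path, edges_reverse, List.mem_reverse]

theorem support_path_subset (p : G.Walk x y) : (hG.path x y).support ⊆ p.support := by
  classical
  rw [← hG.eq_path p.bypass_isPath]
  exact p.support_bypass_subset_support

theorem edges_path_subset (p : G.Walk x y) : (hG.path x y).edges ⊆ p.edges := by
  classical
  rw [← hG.eq_path p.bypass_isPath]
  exact p.edges_bypass_subset_edges

theorem mem_support_path_or (y : V) (hu : u ∈ (hG.path x z).support) :
    u ∈ (hG.path x y).support ∨ u ∈ (hG.path y z).support :=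
  (mem_support_append_iff _ _).mp (hG.support_path_subset _ hu)

theorem path_eq_append (hu : u ∈ (hG.path x y).support) :
    hG.path x y = (hG.path x u).append (hG.path u y) := by
  obtain ⟨p, q, hp, hq, hpq⟩ := (hG.isPath_path x y).mem_support_iff_exists_append.mp hu
  rw [hpq, hG.eq_path hp, hG.eq_path hq]

theorem path_isSubwalk (hu : u ∈ (hG.path x y).support) (hw : w ∈ (hG.path u y).support) :
    (hG.path u w).IsSubwalk (hG.path x y) := by
  refine ⟨hG.path x u, hG.path w y, ?_⟩
  rw [hG.path_eq_append hu, hG.path_eq_append hw, append_assoc]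

theorem eq_of_mem_support_path (hu : u ∈ (hG.path x y).support)
    (hx : w ∈ (hG.path x u).support) (hy : w ∈ (hG.path u y).support) : w = u := by
  by_contra hwu
  have hp : ((hG.path x u).append (hG.path u y)).IsPath := hG.path_eq_append hu ▸ hG.isPath_path x y
  exact hp.ne_of_mem_support_of_append hwu hx hy rfl

theorem path_isSubwalk_or (hu : u ∈ (hG.path x y).support) (hw : w ∈ (hG.path x y).support) :
    (hG.path u w).IsSubwalk (hG.path x y) ∨ (hG.path w u).IsSubwalk (hG.path x y) := by
  rcases (mem_support_append_iff _ _).mp (hG.path_eq_append hu ▸ hw) with hw' | hw'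
  · right
    refine hG.path_isSubwalk hw ?_
    have hwuy : ((hG.path w u).append (hG.path u y)).IsSubwalk (hG.path x y) := by
      refine ⟨hG.path x w, nil, ?_⟩
      rw [append_nil, hG.path_eq_append hu, hG.path_eq_append hw', append_assoc]
    rw [← hG.eq_path (isPath_of_isSubwalk hwuy (hG.isPath_path x y))]
    exact (mem_support_append_iff _ _).mpr (.inl (end_mem_support _))
  · exact .inl (hG.path_isSubwalk hu hw')

theorem support_path_subset_of_mem (hu : u ∈ (hG.path x y).support)
    (hw : w ∈ (hG.path x y).support) : (hG.path u w).support ⊆ (hG.path x y).support := by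
  rcases hG.path_isSubwalk_or hu hw with h | h
  · exact h.support_subset
  · exact fun z hz => h.support_subset (hG.mem_support_path_comm.mp hz)

theorem edges_path_subset_of_mem (hu : u ∈ (hG.path x y).support)
    (hw : w ∈ (hG.path x y).support) : (hG.path u w).edges ⊆ (hG.path x y).edges := by
  rcases hG.path_isSubwalk_or hu hw with h | h
  · exact h.edges_subset
  · exact fun e he => h.edges_subset (hG.mem_edges_path_comm.mp he)

/-- The vertex of the path from `y` to `z` closest to `x` is a median. -/
theorem exists_median (x y z : V) : ∃ m, m ∈ (hG.path x y).support ∧ m ∈ (hG.path x z).support ∧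
    m ∈ (hG.path y z).support := by
  classical
  obtain ⟨m, hm, hmin⟩ := (hG.path y z).support.toFinset.exists_min_image
    (fun m => (hG.path x m).length) ⟨y, by simp⟩
  rw [List.mem_toFinset] at hm
  have hgate : ∀ w ∈ (hG.path x m).support, w ∈ (hG.path y z).support → w = m := by
    intro w hw hwyz
    have hlen := congrArg length (hG.path_eq_append hw)
    rw [length_append] at hlen
    have := hmin w (List.mem_toFinset.mpr hwyz)
    exact eq_of_length_eq_zero (p := hG.path w m) (by omega)
  have hmem : ∀ t ∈ (hG.path y z).support, m ∈ (hG.path x t).support := by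
    intro t ht
    have hp := Walk.isPath_append_of_support_inter (hG.isPath_path x m) (hG.isPath_path m t)
      fun w hw hw' => hgate w hw (hG.support_path_subset_of_mem hm ht hw')
    rw [← hG.eq_path hp]
    exact (mem_support_append_iff _ _).mpr (.inl (end_mem_support _))
  exact ⟨m, hmem y (start_mem_support _), hmem z (end_mem_support _), hm⟩

noncomputable def median (x y z : V) : V := (hG.exists_median x y z).choose

theorem median_spec (x y z : V) : hG.median x y z ∈ (hG.path x y).support ∧
    hG.median x y z ∈ (hG.path x z).support ∧ hG.median x y z ∈ (hG.path y z).support :=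
  (hG.exists_median x y z).choose_spec

theorem eq_median (hxy : u ∈ (hG.path x y).support) (hxz : u ∈ (hG.path x z).support)
    (hyz : u ∈ (hG.path y z).support) : u = hG.median x y z := by
  obtain ⟨mxy, mxz, myz⟩ := hG.median_spec x y z
  set m := hG.median x y z
  rcases hG.mem_support_path_or m hxy with h₁ | h₁
  · rcases hG.mem_support_path_or m hyz with h₃ | h₃
    · exact hG.eq_of_mem_support_path mxy h₁ (hG.mem_support_path_comm.mp h₃)
    · exact hG.eq_of_mem_support_path mxz h₁ h₃
  · rcases hG.mem_support_path_or m hxz with h₂ | h₂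
    · exact hG.eq_of_mem_support_path mxy h₂ h₁
    · exact hG.eq_of_mem_support_path myz (hG.mem_support_path_comm.mp h₁) h₂

theorem median_comm₁₂ (x y z : V) : hG.median x y z = hG.median y x z := by
  obtain ⟨h₁, h₂, h₃⟩ := hG.median_spec x y z
  exact hG.eq_median (hG.mem_support_path_comm.mp h₁) h₃ h₂

theorem median_comm₂₃ (x y z : V) : hG.median x y z = hG.median x z y := by
  obtain ⟨h₁, h₂, h₃⟩ := hG.median_spec x y z
  exact hG.eq_median h₂ h₁ (hG.mem_support_path_comm.mp h₃)

theorem median_eq_self_iff : hG.median x y u = u ↔ u ∈ (hG.path x y).support :=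
  ⟨fun h => h ▸ (hG.median_spec x y u).1, fun h =>
    (hG.eq_median h (end_mem_support _) (end_mem_support _)).symm⟩

theorem median_self (x : V) : hG.median x x x = x :=
  hG.median_eq_self_iff.mpr (start_mem_support _)

theorem eq_median_of_mem_support (hc : w ∈ (hG.path c (hG.median a b c)).support)
    (hab : w ∈ (hG.path a b).support) : w = hG.median a b c := by
  obtain ⟨-, hac, hbc⟩ := hG.median_spec a b c
  have hprefix {d : V} (hd : hG.median a b c ∈ (hG.path d c).support) :
      w ∈ (hG.path d c).support :=
    hG.mem_support_path_comm.mpr <| hG.support_path_subset_of_mem (start_mem_support _)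
      (hG.mem_support_path_comm.mp hd) hc
  exact hG.eq_median hab (hprefix hac) (hprefix hbc)

theorem median_mem_support_path_of_ne (h : hG.median a b c ≠ hG.median a b d) :
    hG.median a b c ∈ (hG.path c d).support := by
  obtain ⟨hab, hac, hbc⟩ := hG.median_spec a b c
  rcases hG.mem_support_path_or d hac with had | hdc
  · rcases hG.mem_support_path_or d hbc with hbd | hdc
    · exact absurd (hG.eq_median hab had hbd) h
    · exact hG.mem_support_path_comm.mp hdc
  · exact hG.mem_support_path_comm.mp hdc

/-- Both endpoints of such an edge would be the median. -/
theorem not_mem_edges_path_median {e : Sym2 V} (hab : e ∈ (hG.path a b).edges) :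
    e ∉ (hG.path c (hG.median a b c)).edges := by
  intro hc
  induction e using Sym2.ind with
  | h u v =>
    have huv : u ≠ v := ((hG.path a b).edges_subset_edgeSet hab).ne
    exact huv <|
      (hG.eq_median_of_mem_support (fst_mem_support_of_mem_edges _ hc)
        (fst_mem_support_of_mem_edges _ hab)).trans
      (hG.eq_median_of_mem_support (snd_mem_support_of_mem_edges _ hc)
        (snd_mem_support_of_mem_edges _ hab)).symm

theorem median_eq_median_iff_disjoint (a b c d : V) :
    hG.median a b c = hG.median a b d ↔ (hG.path a b).edges.Disjoint (hG.path c d).edges := by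
  constructor
  · intro hm e hab hcd
    have hcmd := hG.edges_path_subset
      ((hG.path c (hG.median a b c)).append (hG.path (hG.median a b c) d)) hcd
    rw [edges_append, List.mem_append] at hcmd
    rcases hcmd with hcm | hmd
    · exact hG.not_mem_edges_path_median hab hcm
    · rw [hm, hG.mem_edges_path_comm] at hmd
      exact hG.not_mem_edges_path_median hab hmd
  · intro hdisj
    by_contra hne
    have hc := hG.median_mem_support_path_of_ne hne
    have hd := hG.mem_support_path_comm.mp (hG.median_mem_support_path_of_ne (Ne.symm hne))
    have hnil : ¬(hG.path (hG.median a b c) (hG.median a b d)).Nil := not_nil_of_ne hne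
    exact hdisj
      (hG.edges_path_subset_of_mem (hG.median_spec a b c).1 (hG.median_spec a b d).1
        (mk_start_snd_mem_edges hnil))
      (hG.edges_path_subset_of_mem hc hd (mk_start_snd_mem_edges hnil))

theorem snd_path_eq_of_mem (hw : w ∈ (hG.path u x).support) (hwu : w ≠ u) :
    (hG.path u x).snd = (hG.path u w).snd :=
  (hG.isAcyclic.eq_snd_of_adj_start (hG.isPath_path u x) (adj_snd (not_nil_of_ne hwu.symm))
    (hG.support_path_subset_of_mem (start_mem_support _) hw
      (snd_mem_support_of_mem_edges _ (mk_start_snd_mem_edges (not_nil_of_ne hwu.symm))))).symm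

theorem mem_support_path_of_snd_ne (h : (hG.path u x).snd ≠ (hG.path u y).snd) :
    u ∈ (hG.path x y).support := by
  by_contra hu
  obtain ⟨hux, huy, hxy⟩ := hG.median_spec u x y
  have hne : hG.median u x y ≠ u := fun h => hu (h ▸ hxy)
  exact h ((hG.snd_path_eq_of_mem hux hne).trans (hG.snd_path_eq_of_mem huy hne).symm)

theorem forall_isPath_edges_disjoint_iff (a b c d : V) :
    (∀ (P : G.Walk a b) (Q : G.Walk c d), P.IsPath → Q.IsPath → ∀ e ∈ P.edges, e ∉ Q.edges) ↔
      (hG.path a b).edges.Disjoint (hG.path c d).edges := by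
  refine ⟨fun h e hab hcd => h _ _ (hG.isPath_path a b) (hG.isPath_path c d) e hab hcd,
    fun h P Q hP hQ e hab hcd => ?_⟩
  rw [hG.eq_path hP] at hab
  rw [hG.eq_path hQ] at hcd
  exact h hab hcd

theorem adj_iff_forall_mem_support_path :
    G.Adj v w ↔ v ≠ w ∧ ∀ u ∈ (hG.path v w).support, u = v ∨ u = w := by
  constructor
  · intro hvw
    rw [← hG.eq_path hvw.isPath_toWalk, Adj.support_toWalk]
    exact ⟨hvw.ne, by simp⟩
  · rintro ⟨hvw, h⟩
    have hnil := not_nil_of_ne (p := hG.path v w) hvw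
    have hadj := adj_snd hnil
    rcases h _ (snd_mem_support_of_mem_edges _ (mk_start_snd_mem_edges hnil)) with hv | hw
    · exact absurd hv hadj.ne'
    · exact hw ▸ hadj

theorem adj_iff_of_mem_support_path_iff {V' : Type*} {G' : SimpleGraph V'} (hG' : G'.IsTree)
    (e : V ≃ V') (he : ∀ u v w, e u ∈ (hG'.path (e v) (e w)).support ↔ u ∈ (hG.path v w).support) :
    G'.Adj (e v) (e w) ↔ G.Adj v w := by
  rw [hG.adj_iff_forall_mem_support_path, hG'.adj_iff_forall_mem_support_path,
    ← e.forall_congr_right]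
  simp only [he, e.apply_eq_iff_eq, e.injective.ne_iff]

theorem not_disjoint_edges_path_of_degree_eq_one [Fintype (G.neighborSet x)]
    (hx : G.degree x = 1) (hxy : x ≠ y) (hxz : x ≠ z) :
    ¬(hG.path x y).edges.Disjoint (hG.path x z).edges := by
  obtain ⟨n, -, hn⟩ := degree_eq_one_iff_existsUnique_adj.mp hx
  have hy := not_nil_of_ne (p := hG.path x y) hxy
  have hz := not_nil_of_ne (p := hG.path x z) hxz
  have hsnd : (hG.path x y).snd = (hG.path x z).snd :=
    (hn _ (adj_snd hy)).trans (hn _ (adj_snd hz)).symm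
  exact fun h => h (mk_start_snd_mem_edges hy) (hsnd ▸ mk_start_snd_mem_edges hz)

section Transfer

variable {L β : Type*} {ℓ : L → V} {F : L → L → L → β}

theorem eq_of_median_eq_of_eq_left (hF₂₃ : ∀ x y z, F x y z = F x z y)
    (hswap : ∀ x y z w, hG.median (ℓ x) (ℓ y) (ℓ z) = hG.median (ℓ x) (ℓ y) (ℓ w) →
      F x y z = F x y w)
    {a b d e f : L} (h : hG.median (ℓ d) (ℓ a) (ℓ b) = hG.median (ℓ d) (ℓ e) (ℓ f)) :
    F d a b = F d e f := by
  obtain ⟨hda, hdb, hab⟩ := hG.median_spec (ℓ d) (ℓ a) (ℓ b)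
  have key {e f : L} (h : hG.median (ℓ d) (ℓ a) (ℓ b) = hG.median (ℓ d) (ℓ e) (ℓ f))
      (hbe : hG.median (ℓ d) (ℓ a) (ℓ b) ∈ (hG.path (ℓ b) (ℓ e)).support) :
      F d a b = F d e f := by
    have hde := h ▸ (hG.median_spec (ℓ d) (ℓ e) (ℓ f)).1
    calc F d a b = F d b a := hF₂₃ _ _ _
      _ = F d b e := hswap _ _ _ _ <|
        (hG.eq_median hdb hda (hG.mem_support_path_comm.mp hab)).symm.trans
          (hG.eq_median hdb hde hbe)
      _ = F d e b := hF₂₃ _ _ _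
      _ = F d e f := hswap _ _ _ _ <|
        (hG.eq_median hde hdb (hG.mem_support_path_comm.mp hbe)).symm.trans h
  rcases hG.mem_support_path_or (ℓ b) (h ▸ (hG.median_spec (ℓ d) (ℓ e) (ℓ f)).2.2) with heb | hbf
  · exact key h (hG.mem_support_path_comm.mp heb)
  · exact (key (h.trans (hG.median_comm₂₃ _ _ _)) hbf).trans (hF₂₃ _ _ _).symm

/-- Two triples with the same median are joined, up to permutation, by at most three
replacements of a single entry, each keeping the median fixed. -/
theorem eq_of_median_eq (hF₁₂ : ∀ x y z, F x y z = F y x z)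
    (hF₂₃ : ∀ x y z, F x y z = F x z y)
    (hswap : ∀ x y z w, hG.median (ℓ x) (ℓ y) (ℓ z) = hG.median (ℓ x) (ℓ y) (ℓ w) →
      F x y z = F x y w)
    {a b c d e f : L} (h : hG.median (ℓ a) (ℓ b) (ℓ c) = hG.median (ℓ d) (ℓ e) (ℓ f)) :
    F a b c = F d e f := by
  have hrot (x y z : L) : F x y z = F z x y := by rw [hF₁₂, hF₂₃, hF₁₂, hF₂₃]
  have key {a b d e f : L} (h : hG.median (ℓ a) (ℓ b) (ℓ c) = hG.median (ℓ d) (ℓ e) (ℓ f))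
      (hcd : hG.median (ℓ a) (ℓ b) (ℓ c) ∈ (hG.path (ℓ c) (ℓ d)).support)
      (had : hG.median (ℓ a) (ℓ b) (ℓ c) ∈ (hG.path (ℓ a) (ℓ d)).support) :
      F a b c = F d e f := by
    obtain ⟨hab, hac, hbc⟩ := hG.median_spec (ℓ a) (ℓ b) (ℓ c)
    have hca := hG.mem_support_path_comm.mp hac
    calc F a b c = F c a b := hrot _ _ _
      _ = F c a d := hswap _ _ _ _ <|
        (hG.eq_median hca (hG.mem_support_path_comm.mp hbc) hab).symm.trans
          (hG.eq_median hca hcd had)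
      _ = F d c a := hrot _ _ _
      _ = F d e f := hG.eq_of_median_eq_of_eq_left hF₂₃ hswap <|
        (hG.eq_median (hG.mem_support_path_comm.mp hcd) (hG.mem_support_path_comm.mp had)
          hca).symm.trans h
  have hde := h ▸ (hG.median_spec (ℓ d) (ℓ e) (ℓ f)).1
  have hab := (hG.median_spec (ℓ a) (ℓ b) (ℓ c)).1
  have hed : hG.median (ℓ a) (ℓ b) (ℓ c) = hG.median (ℓ e) (ℓ d) (ℓ f) :=
    h.trans (hG.median_comm₁₂ _ _ _)
  have hba : hG.median (ℓ b) (ℓ a) (ℓ c) = hG.median (ℓ a) (ℓ b) (ℓ c) :=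
    (hG.median_comm₁₂ _ _ _).symm
  rcases hG.mem_support_path_or (ℓ c) hde with hdc | hce
  · have hcd := hG.mem_support_path_comm.mp hdc
    rcases hG.mem_support_path_or (ℓ d) hab with had | hdb
    · exact key h hcd had
    · exact (hF₁₂ _ _ _).trans (key (hba.trans h) (hba ▸ hcd)
        (hba ▸ hG.mem_support_path_comm.mp hdb))
  · rcases hG.mem_support_path_or (ℓ e) hab with hae | heb
    · exact (key hed hce hae).trans (hF₁₂ _ _ _).symm
    · exact (hF₁₂ _ _ _).trans ((key (hba.trans hed) (hba ▸ hce)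
        (hba ▸ hG.mem_support_path_comm.mp heb)).trans (hF₁₂ _ _ _).symm)

theorem median_eq_median_iff_of_disjoint_iff {V' : Type*} {G' : SimpleGraph V'}
    (hG' : G'.IsTree) {ℓ' : L → V'}
    (hdisj : ∀ a b c d, (hG.path (ℓ a) (ℓ b)).edges.Disjoint (hG.path (ℓ c) (ℓ d)).edges ↔
      (hG'.path (ℓ' a) (ℓ' b)).edges.Disjoint (hG'.path (ℓ' c) (ℓ' d)).edges)
    {a b c d e f : L} :
    hG.median (ℓ a) (ℓ b) (ℓ c) = hG.median (ℓ d) (ℓ e) (ℓ f) ↔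
      hG'.median (ℓ' a) (ℓ' b) (ℓ' c) = hG'.median (ℓ' d) (ℓ' e) (ℓ' f) := by
  have hswap (x y z w : L) : hG.median (ℓ x) (ℓ y) (ℓ z) = hG.median (ℓ x) (ℓ y) (ℓ w) ↔
      hG'.median (ℓ' x) (ℓ' y) (ℓ' z) = hG'.median (ℓ' x) (ℓ' y) (ℓ' w) := by
    rw [hG.median_eq_median_iff_disjoint, hG'.median_eq_median_iff_disjoint]
    exact hdisj x y z w
  exact ⟨hG.eq_of_median_eq (F := fun x y z => hG'.median (ℓ' x) (ℓ' y) (ℓ' z))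
      (fun x y z => hG'.median_comm₁₂ (ℓ' x) (ℓ' y) (ℓ' z))
      (fun x y z => hG'.median_comm₂₃ (ℓ' x) (ℓ' y) (ℓ' z)) fun x y z w => (hswap x y z w).mp,
    hG'.eq_of_median_eq (F := fun x y z => hG.median (ℓ x) (ℓ y) (ℓ z))
      (fun x y z => hG.median_comm₁₂ (ℓ x) (ℓ y) (ℓ z))
      (fun x y z => hG.median_comm₂₃ (ℓ x) (ℓ y) (ℓ z)) fun x y z w => (hswap x y z w).mpr⟩

end Transfer

section Labelled

variable [Fintype V] [DecidableRel G.Adj] {L : Type*} {ℓ : L → V}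

/-- Every branch at `v` ends in a labelled leaf: take a farthest vertex in the branch. -/
theorem exists_snd_path_label_eq (hdeg : ∀ v, G.degree v ≠ 1 → 3 ≤ G.degree v)
    (hleaf : ∀ v, G.degree v = 1 ↔ ∃ x, ℓ x = v) {n : V} (hvn : G.Adj v n) :
    ∃ z, (hG.path v (ℓ z)).snd = n := by
  classical
  obtain ⟨y, hy, hmax⟩ := (Finset.univ.filter fun y => (hG.path v y).snd = n).exists_max_image
    (fun y => (hG.path v y).length) ⟨n, by simp [← hG.eq_path hvn.isPath_toWalk]⟩
  rw [Finset.mem_filter] at hy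
  by_cases hy₁ : G.degree y = 1
  · obtain ⟨z, rfl⟩ := (hleaf y).mp hy₁
    exact ⟨z, hy.2⟩
  have hyv : y ≠ v := by
    rintro rfl
    simp only [path_self] at hy
    exact hvn.ne hy.2
  obtain ⟨t, hyt, hts, -⟩ := exists_adj_ne_ne_of_three_le_degree (hdeg y hy₁)
    (hG.path y v).snd (hG.path y v).snd
  have hy_vt : y ∈ (hG.path v t).support := by
    by_contra hy_vt
    refine hts (hG.isAcyclic.eq_snd_of_adj_start (hG.isPath_path y v) hyt ?_)
    exact hG.mem_support_path_comm.mp <| hG.isAcyclic.mem_support_of_ne_mem_support_of_adj_of_isPath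
      (hG.isPath_path v y) (hG.isPath_path v t) hyt hy_vt
  have hlen := hmax t (Finset.mem_filter.mpr ⟨Finset.mem_univ _,
    (hG.snd_path_eq_of_mem hy_vt hyv).trans hy.2⟩)
  rw [hG.isAcyclic.path_concat (hG.isPath_path v y) (hG.isPath_path v t) hyt hy_vt,
    length_concat] at hlen
  omega

theorem exists_snd_path_label_ne (hdeg : ∀ v, G.degree v ≠ 1 → 3 ≤ G.degree v)
    (hleaf : ∀ v, G.degree v = 1 ↔ ∃ x, ℓ x = v) (hv : G.degree v ≠ 1) (a b : V) :
    ∃ z, (hG.path v (ℓ z)).snd ≠ (hG.path v a).snd ∧ (hG.path v (ℓ z)).snd ≠ (hG.path v b).snd := by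
  obtain ⟨n, hvn, hna, hnb⟩ := exists_adj_ne_ne_of_three_le_degree (hdeg v hv)
    (hG.path v a).snd (hG.path v b).snd
  obtain ⟨z, hz⟩ := hG.exists_snd_path_label_eq hdeg hleaf hvn
  exact ⟨z, hz ▸ hna, hz ▸ hnb⟩

theorem mem_support_path_label_iff (hdeg : ∀ v, G.degree v ≠ 1 → 3 ≤ G.degree v)
    (hleaf : ∀ v, G.degree v = 1 ↔ ∃ x, ℓ x = v) {x y : L} :
    u ∈ (hG.path (ℓ x) (ℓ y)).support ↔ ∃ z, hG.median (ℓ x) (ℓ y) (ℓ z) = u := by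
  constructor
  · intro hu
    by_cases hu₁ : G.degree u = 1
    · obtain ⟨z, rfl⟩ := (hleaf u).mp hu₁
      exact ⟨z, hG.median_eq_self_iff.mpr hu⟩
    · obtain ⟨z, hzx, hzy⟩ := hG.exists_snd_path_label_ne hdeg hleaf hu₁ (ℓ x) (ℓ y)
      exact ⟨z, (hG.eq_median hu (hG.mem_support_path_of_snd_ne hzx.symm)
        (hG.mem_support_path_of_snd_ne hzy.symm)).symm⟩
  · rintro ⟨z, rfl⟩
    exact (hG.median_spec _ _ _).1

theorem exists_mem_support_path_label (hdeg : ∀ v, G.degree v ≠ 1 → 3 ≤ G.degree v)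
    (hleaf : ∀ v, G.degree v = 1 ↔ ∃ x, ℓ x = v) (v : V) :
    ∃ x y, v ∈ (hG.path (ℓ x) (ℓ y)).support := by
  by_cases hv : G.degree v = 1
  · obtain ⟨x, rfl⟩ := (hleaf v).mp hv
    exact ⟨x, x, start_mem_support _⟩
  · obtain ⟨x, hx, -⟩ := hG.exists_snd_path_label_ne hdeg hleaf hv v v
    obtain ⟨y, hy, -⟩ := hG.exists_snd_path_label_ne hdeg hleaf hv (ℓ x) (ℓ x)
    exact ⟨y, x, hG.mem_support_path_of_snd_ne hy⟩

theorem surjective_median_label (hdeg : ∀ v, G.degree v ≠ 1 → 3 ≤ G.degree v)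
    (hleaf : ∀ v, G.degree v = 1 ↔ ∃ x, ℓ x = v) :
    Function.Surjective fun t : L × L × L => hG.median (ℓ t.1) (ℓ t.2.1) (ℓ t.2.2) := by
  intro v
  obtain ⟨x, y, hv⟩ := hG.exists_mem_support_path_label hdeg hleaf v
  obtain ⟨z, hz⟩ := (hG.mem_support_path_label_iff hdeg hleaf).mp hv
  exact ⟨(x, y, z), hz⟩

theorem exists_label_mem_support_path (hdeg : ∀ v, G.degree v ≠ 1 → 3 ≤ G.degree v)
    (hleaf : ∀ v, G.degree v = 1 ↔ ∃ x, ℓ x = v) (hu : u ∉ (hG.path v w).support) :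
    ∃ x, v ∈ (hG.path (ℓ x) w).support ∧ u ∉ (hG.path (ℓ x) w).support := by
  by_cases hv : G.degree v = 1
  · obtain ⟨x, rfl⟩ := (hleaf v).mp hv
    exact ⟨x, start_mem_support _, hu⟩
  obtain ⟨z, hzw, hzu⟩ := hG.exists_snd_path_label_ne hdeg hleaf hv w u
  refine ⟨z, hG.mem_support_path_of_snd_ne hzw, fun huz => ?_⟩
  rcases hG.mem_support_path_or v huz with hzv | hvw
  · have huv : u ≠ v := fun h => hu (h ▸ start_mem_support _)
    exact hzu (hG.snd_path_eq_of_mem (hG.mem_support_path_comm.mp hzv) huv)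
  · exact hu hvw

theorem mem_support_path_iff_forall_label (hdeg : ∀ v, G.degree v ≠ 1 → 3 ≤ G.degree v)
    (hleaf : ∀ v, G.degree v = 1 ↔ ∃ x, ℓ x = v) :
    u ∈ (hG.path v w).support ↔ ∀ x y, v ∈ (hG.path (ℓ x) (ℓ y)).support →
      w ∈ (hG.path (ℓ x) (ℓ y)).support → u ∈ (hG.path (ℓ x) (ℓ y)).support := by
  refine ⟨fun hu x y hv hw => hG.support_path_subset_of_mem hv hw hu, fun h => ?_⟩
  by_contra hu
  obtain ⟨x, hvx, hux⟩ := hG.exists_label_mem_support_path hdeg hleaf hu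
  obtain ⟨y, hwy, huy⟩ := hG.exists_label_mem_support_path hdeg hleaf
    (mt hG.mem_support_path_comm.mpr hux)
  have hvy := hG.support_path_subset_of_mem (start_mem_support _)
    (hG.mem_support_path_comm.mp hwy) hvx
  exact huy (h y x (hG.mem_support_path_comm.mp hvy) hwy)

theorem disjoint_edges_path_label_iff (hinj : Function.Injective ℓ)
    (hleaf : ∀ v, G.degree v = 1 ↔ ∃ x, ℓ x = v) {a b c d : L}
    (h : ¬(a ≠ b ∧ a ≠ c ∧ a ≠ d ∧ b ≠ c ∧ b ≠ d ∧ c ≠ d)) :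
    (hG.path (ℓ a) (ℓ b)).edges.Disjoint (hG.path (ℓ c) (ℓ d)).edges ↔ a = b ∨ c = d := by
  by_cases hab : a = b
  · subst hab
    simp [path_self]
  by_cases hcd : c = d
  · subst hcd
    simp [path_self]
  simp only [hab, hcd, or_self, iff_false]
  have hleaf' (x : L) : G.degree (ℓ x) = 1 := (hleaf _).mpr ⟨x, rfl⟩
  have hne {x y : L} (h : x ≠ y) : ℓ x ≠ ℓ y := hinj.ne h
  rcases (by tauto : a = c ∨ a = d ∨ b = c ∨ b = d) with rfl | rfl | rfl | rfl
  · exact hG.not_disjoint_edges_path_of_degree_eq_one (hleaf' a) (hne hab) (hne hcd)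
  · rw [← hG.reverse_path (ℓ a) (ℓ c), edges_reverse, List.disjoint_reverse_right]
    exact hG.not_disjoint_edges_path_of_degree_eq_one (hleaf' a) (hne hab) (hne (Ne.symm hcd))
  · rw [← hG.reverse_path (ℓ b) (ℓ a), edges_reverse, List.disjoint_reverse_left]
    exact hG.not_disjoint_edges_path_of_degree_eq_one (hleaf' b) (hne (Ne.symm hab)) (hne hcd)
  · rw [← hG.reverse_path (ℓ b) (ℓ a), ← hG.reverse_path (ℓ b) (ℓ c), edges_reverse, edges_reverse,
      List.disjoint_reverse_left, List.disjoint_reverse_right]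
    exact hG.not_disjoint_edges_path_of_degree_eq_one (hleaf' b) (hne (Ne.symm hab))
      (hne (Ne.symm hcd))

end Labelled

end IsTree

end SimpleGraph

theorem combinatorial_type_determined_by_path_disjointness_general
    {V₁ V₂ L : Type} [Fintype V₁] [Fintype V₂]
    (G₁ : SimpleGraph V₁) (G₂ : SimpleGraph V₂)
    [DecidableRel G₁.Adj] [DecidableRel G₂.Adj]
    (h₁ : G₁.IsTree) (h₂ : G₂.IsTree)
    (hdeg₁ : ∀ v, G₁.degree v ≠ 1 → 3 ≤ G₁.degree v)
    (hdeg₂ : ∀ v, G₂.degree v ≠ 1 → 3 ≤ G₂.degree v)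
    (ℓ₁ : L → V₁) (ℓ₂ : L → V₂)
    (hinj₁ : Function.Injective ℓ₁) (hinj₂ : Function.Injective ℓ₂)
    (hleaf₁ : ∀ v, G₁.degree v = 1 ↔ ∃ x, ℓ₁ x = v)
    (hleaf₂ : ∀ v, G₂.degree v = 1 ↔ ∃ x, ℓ₂ x = v)
    (hiff : ∀ a b c d : L, a ≠ b → a ≠ c → a ≠ d → b ≠ c → b ≠ d → c ≠ d →
      ((∀ (P : G₁.Walk (ℓ₁ a) (ℓ₁ b)) (Q : G₁.Walk (ℓ₁ c) (ℓ₁ d)),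
          P.IsPath → Q.IsPath → ∀ e ∈ P.edges, e ∉ Q.edges) ↔
       (∀ (P : G₂.Walk (ℓ₂ a) (ℓ₂ b)) (Q : G₂.Walk (ℓ₂ c) (ℓ₂ d)),
          P.IsPath → Q.IsPath → ∀ e ∈ P.edges, e ∉ Q.edges))) :
    ∃ φ : G₁ ≃g G₂, ∀ x : L, φ (ℓ₁ x) = ℓ₂ x := by
  have hdisj (a b c d : L) :
      (h₁.path (ℓ₁ a) (ℓ₁ b)).edges.Disjoint (h₁.path (ℓ₁ c) (ℓ₁ d)).edges ↔
        (h₂.path (ℓ₂ a) (ℓ₂ b)).edges.Disjoint (h₂.path (ℓ₂ c) (ℓ₂ d)).edges := by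
    by_cases hdist : a ≠ b ∧ a ≠ c ∧ a ≠ d ∧ b ≠ c ∧ b ≠ d ∧ c ≠ d
    · obtain ⟨hab, hac, had, hbc, hbd, hcd⟩ := hdist
      rw [← h₁.forall_isPath_edges_disjoint_iff, ← h₂.forall_isPath_edges_disjoint_iff]
      exact hiff a b c d hab hac had hbc hbd hcd
    · rw [h₁.disjoint_edges_path_label_iff hinj₁ hleaf₁ hdist,
        h₂.disjoint_edges_path_label_iff hinj₂ hleaf₂ hdist]
  obtain ⟨e, he⟩ := (h₁.surjective_median_label hdeg₁ hleaf₁).exists_equiv_apply_eq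
    (h₂.surjective_median_label hdeg₂ hleaf₂) fun _ _ =>
      h₁.median_eq_median_iff_of_disjoint_iff h₂ hdisj
  have he' (x y z : L) : e (h₁.median (ℓ₁ x) (ℓ₁ y) (ℓ₁ z)) = h₂.median (ℓ₂ x) (ℓ₂ y) (ℓ₂ z) :=
    he (x, y, z)
  have he_label (u : V₁) (x y : L) :
      e u ∈ (h₂.path (ℓ₂ x) (ℓ₂ y)).support ↔ u ∈ (h₁.path (ℓ₁ x) (ℓ₁ y)).support := by
    rw [h₂.mem_support_path_label_iff hdeg₂ hleaf₂, h₁.mem_support_path_label_iff hdeg₁ hleaf₁]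
    exact exists_congr fun z => by rw [← he', e.apply_eq_iff_eq]
  refine ⟨⟨e, h₁.adj_iff_of_mem_support_path_iff h₂ e fun u v w => ?_⟩, fun x => ?_⟩
  · rw [h₁.mem_support_path_iff_forall_label hdeg₁ hleaf₁,
      h₂.mem_support_path_iff_forall_label hdeg₂ hleaf₂]
    simp only [he_label]
  · rw [← h₁.median_self (ℓ₁ x), ← h₂.median_self (ℓ₂ x)]
    exact he' x x x

/-- Two finite trees whose non-leaf vertices have degree at least 3, with leaves labeled
bijectively by a common label set `L` of size at least 3, are isomorphic by a
label-preserving graph isomorphism as soon as, for every quadruple of pairwise distinct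
labels `a, b, c, d`, the (unique) path between the leaves labeled `a` and `b` is
edge-disjoint from the (unique) path between the leaves labeled `c` and `d` in the first
tree iff the corresponding paths are edge-disjoint in the second tree. -/
theorem combinatorial_type_determined_by_path_disjointness
    {V₁ V₂ L : Type} [Fintype V₁] [Fintype V₂] [Fintype L]
    [DecidableEq V₁] [DecidableEq V₂]
    (G₁ : SimpleGraph V₁) (G₂ : SimpleGraph V₂)
    [DecidableRel G₁.Adj] [DecidableRel G₂.Adj]
    (h₁ : G₁.IsTree) (h₂ : G₂.IsTree)
    (hdeg₁ : ∀ v, G₁.degree v ≠ 1 → 3 ≤ G₁.degree v)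
    (hdeg₂ : ∀ v, G₂.degree v ≠ 1 → 3 ≤ G₂.degree v)
    (ℓ₁ : L → V₁) (ℓ₂ : L → V₂)
    (hinj₁ : Function.Injective ℓ₁) (hinj₂ : Function.Injective ℓ₂)
    (hleaf₁ : ∀ v, G₁.degree v = 1 ↔ ∃ x, ℓ₁ x = v)
    (hleaf₂ : ∀ v, G₂.degree v = 1 ↔ ∃ x, ℓ₂ x = v)
    (hL : 3 ≤ Fintype.card L)
    (hiff : ∀ a b c d : L, a ≠ b → a ≠ c → a ≠ d → b ≠ c → b ≠ d → c ≠ d →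
      ((∀ (P : G₁.Walk (ℓ₁ a) (ℓ₁ b)) (Q : G₁.Walk (ℓ₁ c) (ℓ₁ d)),
          P.IsPath → Q.IsPath → ∀ e ∈ P.edges, e ∉ Q.edges) ↔
       (∀ (P : G₂.Walk (ℓ₂ a) (ℓ₂ b)) (Q : G₂.Walk (ℓ₂ c) (ℓ₂ d)),
          P.IsPath → Q.IsPath → ∀ e ∈ P.edges, e ∉ Q.edges))) :
    ∃ φ : G₁ ≃g G₂, ∀ x : L, φ (ℓ₁ x) = ℓ₂ x :=
  combinatorial_type_determined_by_path_disjointness_general G₁ G₂ h₁ h₂ hdeg₁ hdeg₂ ℓ₁ ℓ₂ hinj₁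
    hinj₂ hleaf₁ hleaf₂ hiff
end

section
/- Let T be a finite tree in which every non-leaf vertex has degree at least 3, and let e = uv be an edge both of whose endpoints u, v are non-leaf vertices. Then there exist leaves a, b, c, d of T such that the unique path from a to b and the unique path from c to d both contain the edge e, and e is the only edge they have in common. -/
/-!
Acyclicity makes paths unique, so two paths leaving a vertex `u` through different neighbours
meet only at `u` and in particular share no edge. As `u` and `v` have degree at least 3, pick
neighbours `u₁ ≠ u₂` of `u` and `v₁ ≠ v₂` of `v` off the edge `uv`. A longest path leaving `u`
through `u₁` ends at a leaf, since otherwise it could be extended; this gives leaves `a, b, c, d`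
beyond `u₁, u₂, v₁, v₂`, and the paths `a ⋯ u v ⋯ c` and `b ⋯ u v ⋯ d` share only the edge `uv`.
-/

open SimpleGraph Walk Finset

namespace SimpleGraph

variable {V : Type*} {G : SimpleGraph V}

theorem exists_two_adj_ne_of_three_le_degree [Fintype V] [DecidableRel G.Adj] {u : V}
    (hu : 3 ≤ G.degree u) (v : V) :
    ∃ w₁ w₂, G.Adj u w₁ ∧ G.Adj u w₂ ∧ w₁ ≠ w₂ ∧ w₁ ≠ v ∧ w₂ ≠ v := by
  classical
  have hcard : 1 < #((G.neighborFinset u).erase v) := by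
    have := pred_card_le_card_erase (s := G.neighborFinset u) (a := v)
    rw [card_neighborFinset_eq_degree] at this
    omega
  obtain ⟨w₁, hw₁, w₂, hw₂, hne⟩ := one_lt_card.mp hcard
  rw [mem_erase, mem_neighborFinset] at hw₁ hw₂
  exact ⟨w₁, w₂, hw₁.2, hw₂.2, hne, hw₁.1, hw₂.1⟩

namespace IsAcyclic

variable (hG : G.IsAcyclic)
include hG

theorem eq_of_mem_support_of_snd_ne {u a b x : V} {p : G.Walk u a} {q : G.Walk u b}
    (hp : p.IsPath) (hq : q.IsPath) (hpq : p.snd ≠ q.snd)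
    (hxp : x ∈ p.support) (hxq : x ∈ q.support) : x = u := by
  classical
  by_contra hxu
  have hpath : q.takeUntil x hxq = p.takeUntil x hxp :=
    congrArg Subtype.val <| (hG.subsingleton_path u x).elim
      ⟨_, hq.takeUntil hxq⟩ ⟨_, hp.takeUntil hxp⟩
  apply hpq
  rw [← p.snd_takeUntil hxu hxp, ← q.snd_takeUntil hxu hxq, hpath]

theorem disjoint_edges_of_snd_ne {u a b : V} {p : G.Walk u a} {q : G.Walk u b}
    (hp : p.IsPath) (hq : q.IsPath) (hpq : p.snd ≠ q.snd) : p.edges.Disjoint q.edges := by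
  intro e hep heq
  induction e using Sym2.ind with
  | _ x y =>
    have hx := hG.eq_of_mem_support_of_snd_ne hp hq hpq
      (p.fst_mem_support_of_mem_edges hep) (q.fst_mem_support_of_mem_edges heq)
    have hy := hG.eq_of_mem_support_of_snd_ne hp hq hpq
      (p.snd_mem_support_of_mem_edges hep) (q.snd_mem_support_of_mem_edges heq)
    exact (p.adj_of_mem_edges hep).ne (hx.trans hy.symm)

theorem isPath_reverse_append_of_snd_ne {u a b : V} {p : G.Walk u a} {q : G.Walk u b}
    (hp : p.IsPath) (hq : q.IsPath) (hpq : p.snd ≠ q.snd) : (p.reverse.append q).IsPath := by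
  rw [hG.isPath_iff_isTrail, isTrail_append, edges_reverse, List.disjoint_reverse_left]
  exact ⟨hp.isTrail.reverse, hq.isTrail, hG.disjoint_edges_of_snd_ne hp hq hpq⟩

theorem isPath_cons_of_snd_ne {u v b : V} {q : G.Walk v b} (hq : q.IsPath) (h : G.Adj u v)
    (hqu : q.snd ≠ u) : (cons h q).IsPath :=
  hq.cons fun hu ↦ hqu (hG.eq_snd_of_adj_start hq h.symm hu).symm

theorem eq_of_mem_edges_reverse_append_cons {u v a b c d : V} (huv : G.Adj u v)
    {pa : G.Walk u a} {pb : G.Walk u b} {pc : G.Walk v c} {pd : G.Walk v d}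
    (hpa : pa.IsPath) (hpb : pb.IsPath) (hpc : pc.IsPath) (hpd : pd.IsPath)
    (hab : pa.snd ≠ pb.snd) (hcd : pc.snd ≠ pd.snd) (hav : pa.snd ≠ v) (hbv : pb.snd ≠ v)
    (hcu : pc.snd ≠ u) (hdu : pd.snd ≠ u) {e : Sym2 V}
    (heP : e ∈ (pa.reverse.append (cons huv pc)).edges)
    (heQ : e ∈ (pb.reverse.append (cons huv pd)).edges) : e = s(u, v) := by
  have hAB := hG.disjoint_edges_of_snd_ne hpa hpb hab
  have hCD := hG.disjoint_edges_of_snd_ne hpc hpd hcd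
  have hAD := (List.disjoint_cons_right.1 <| hG.disjoint_edges_of_snd_ne hpa
    (hG.isPath_cons_of_snd_ne hpd huv hdu) (by simpa)).2
  have hBC := (List.disjoint_cons_right.1 <| hG.disjoint_edges_of_snd_ne hpb
    (hG.isPath_cons_of_snd_ne hpc huv hcu) (by simpa)).2
  simp only [edges_append, edges_reverse, edges_cons, List.mem_append, List.mem_reverse,
    List.mem_cons] at heP heQ
  rcases heP with hea | rfl | hec
  · rcases heQ with heb | rfl | hed
    · exact (hAB hea heb).elim
    · rfl
    · exact (hAD hea hed).elim
  · rfl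
  · rcases heQ with heb | rfl | hed
    · exact (hBC heb hec).elim
    · rfl
    · exact (hCD hec hed).elim

theorem exists_isPath_degree_eq_one_of_mem_support [Fintype V] [DecidableRel G.Adj]
    {u x w : V} (p : G.Walk u x) (hp : p.IsPath) (hxu : x ≠ u) (hw : w ∈ p.support) :
    ∃ a, ∃ q : G.Walk u a, q.IsPath ∧ w ∈ q.support ∧ G.degree a = 1 := by
  classical
  by_cases hx : G.degree x = 1
  · exact ⟨x, p, hp, hw, hx⟩
  have hprev : p.penultimate ∈ G.neighborFinset x :=
    (mem_neighborFinset _ _ _).2 (p.adj_penultimate (not_nil_of_ne hxu.symm)).symm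
  have hcard : 1 < #(G.neighborFinset x) := by
    have := card_pos.2 ⟨_, hprev⟩
    rw [card_neighborFinset_eq_degree] at this ⊢
    omega
  obtain ⟨y, hy, hyp⟩ := exists_mem_ne hcard p.penultimate
  have hxy : G.Adj x y := (mem_neighborFinset _ _ _).1 hy
  have hyp' : y ∉ p.support := fun h ↦ hyp (hG.eq_penultimate_of_adj_end hp hxy h)
  have hyu : y ≠ u := fun h ↦ hyp' (h ▸ p.start_mem_support)
  exact exists_isPath_degree_eq_one_of_mem_support (p.concat hxy) (hp.concat hyp' hxy) hyu
    (p.support_subset_support_concat hxy hw)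
termination_by Fintype.card V - p.length
decreasing_by
  have := (hp.concat hyp' hxy).length_lt
  rw [length_concat] at this ⊢
  omega

theorem exists_isPath_snd_eq_degree_eq_one [Fintype V] [DecidableRel G.Adj] {u w : V}
    (h : G.Adj u w) : ∃ a, ∃ q : G.Walk u a, q.IsPath ∧ q.snd = w ∧ G.degree a = 1 := by
  obtain ⟨a, q, hq, hw, ha⟩ := hG.exists_isPath_degree_eq_one_of_mem_support (w := w)
    (cons h nil) (IsPath.nil.cons (by simpa using h.ne)) h.ne.symm (by simp)
  exact ⟨a, q, hq, (hG.eq_snd_of_adj_start hq h hw).symm, ha⟩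

end IsAcyclic

end SimpleGraph

theorem internal_edge_double_ratio_general {V : Type} [Fintype V]
    (G : SimpleGraph V) [DecidableRel G.Adj] (hT : G.IsTree)
    (hdeg : ∀ x, G.degree x ≠ 1 → 3 ≤ G.degree x)
    (u v : V) (huv : G.Adj u v) (hu : G.degree u ≠ 1) (hv : G.degree v ≠ 1) :
    ∃ a b c d : V,
      G.degree a = 1 ∧ G.degree b = 1 ∧ G.degree c = 1 ∧ G.degree d = 1 ∧
      ∃ (P : G.Walk a b) (Q : G.Walk c d), P.IsPath ∧ Q.IsPath ∧
        s(u, v) ∈ P.edges ∧ s(u, v) ∈ Q.edges ∧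
        ∀ e ∈ P.edges, e ∈ Q.edges → e = s(u, v) := by
  have hG := hT.isAcyclic
  obtain ⟨u₁, u₂, hu₁, hu₂, hu₁₂, hu₁v, hu₂v⟩ := exists_two_adj_ne_of_three_le_degree (hdeg u hu) v
  obtain ⟨v₁, v₂, hv₁, hv₂, hv₁₂, hv₁u, hv₂u⟩ := exists_two_adj_ne_of_three_le_degree (hdeg v hv) u
  obtain ⟨a, pa, hpa, rfl, ha⟩ := hG.exists_isPath_snd_eq_degree_eq_one hu₁
  obtain ⟨b, pb, hpb, rfl, hb⟩ := hG.exists_isPath_snd_eq_degree_eq_one hu₂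
  obtain ⟨c, pc, hpc, rfl, hc⟩ := hG.exists_isPath_snd_eq_degree_eq_one hv₁
  obtain ⟨d, pd, hpd, rfl, hd⟩ := hG.exists_isPath_snd_eq_degree_eq_one hv₂
  refine ⟨a, c, b, d, ha, hc, hb, hd, pa.reverse.append (cons huv pc),
    pb.reverse.append (cons huv pd), ?_, ?_, by simp, by simp, fun e heP heQ ↦
    hG.eq_of_mem_edges_reverse_append_cons huv hpa hpb hpc hpd hu₁₂ hv₁₂ hu₁v hu₂v hv₁u hv₂u
    heP heQ⟩
  · exact hG.isPath_reverse_append_of_snd_ne hpa (hG.isPath_cons_of_snd_ne hpc huv hv₁u) (by simpa)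
  · exact hG.isPath_reverse_append_of_snd_ne hpb (hG.isPath_cons_of_snd_ne hpd huv hv₂u) (by simpa)

/-- In a finite tree in which every non-leaf vertex has degree at least 3, for every edge
`e = s(u,v)` with both endpoints non-leaves there exist leaves `a, b, c, d` such that the
paths from `a` to `b` and from `c` to `d` both contain `e` and have no other common edge. -/
theorem internal_edge_double_ratio {V : Type} [Fintype V] [DecidableEq V]
    (G : SimpleGraph V) [DecidableRel G.Adj] (hT : G.IsTree)
    (hdeg : ∀ x, G.degree x ≠ 1 → 3 ≤ G.degree x)
    (u v : V) (huv : G.Adj u v) (hu : G.degree u ≠ 1) (hv : G.degree v ≠ 1) :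
    ∃ a b c d : V,
      G.degree a = 1 ∧ G.degree b = 1 ∧ G.degree c = 1 ∧ G.degree d = 1 ∧
      ∃ (P : G.Walk a b) (Q : G.Walk c d), P.IsPath ∧ Q.IsPath ∧
        s(u, v) ∈ P.edges ∧ s(u, v) ∈ Q.edges ∧
        ∀ e ∈ P.edges, e ∈ Q.edges → e = s(u, v) :=
  internal_edge_double_ratio_general G hT hdeg u v huv hu hv
end
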